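/- Let G = (V, E, ends) be a multigraph. Every extreme point x of the score vector polytope P_G is the vector of a weak parking function: there exists a weak parking function f of G such that x_v = f(v) for all v ∈ V (in particular every extreme point of P_G has nonnegative integer coordinates). -/

import Mathlib

/-! The score vector polytope is the polymatroid `{x ≥ 0 | x(S) ≤ κ_S}` of the submodular,
integer-valued function `κ`. At an extreme point `x`, every vertex `v` with `x_v > 0` lies in a
tight set (otherwise `x` could move along `e_v`); tight sets are closed under `∪` and `∩`, so `v`
has a smallest tight set `A_v`, and `v ∈ A_w` with `v ≠ w` forces `A_v ⊊ A_w` (otherwise `x` could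
move along `e_v - e_w`). Integrality follows by induction on `|A_v|` from
`x_v = κ(A_v) - ∑_{w ∈ A_v - v} x_w`. For the parking condition on `S`, take `v ∈ S` with `|A_v|`
maximal: `T = ⋃_{w ∈ S - v} A_w` is tight and misses `v`, so `x_v ≤ κ(T + v) - κ(T) ≤ d̂_S(v)`. -/

open Finset

/-- The degree `κ_S` of a subset `S` of vertices of a multigraph `(V, E, ends)`. -/
def multigraphKappa {V E : Type*} [Fintype E] [DecidableEq V]
    (ends : E → Sym2 V) (S : Finset V) : ℕ :=
  (Finset.univ.filter fun e => ∃ v ∈ S, v ∈ ends e).card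

/-- The score vector polytope of a multigraph. -/
def scorePolytope {V E : Type*} [Fintype E] [DecidableEq V]
    (ends : E → Sym2 V) : Set (V → ℝ) :=
  {x | (∀ v : V, 0 ≤ x v) ∧
    ∀ S : Finset V, ∑ v ∈ S, x v ≤ (multigraphKappa ends S : ℝ)}

/-- `d̂_S(v)`: the number of edges joining `v` to `(V ∖ S) ∪ {v}`
(loops at `v` counted once each). -/
def dhat {V E : Type*} [Fintype V] [Fintype E] [DecidableEq V]
    (ends : E → Sym2 V) (S : Finset V) (v : V) : ℕ :=
  (Finset.univ.filter fun e : E => ∃ u : V, ends e = s(v, u) ∧ (u = v ∨ u ∉ S)).card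

/-- A weak parking function of a multigraph: for every nonempty `S ⊆ V` there is
`v ∈ S` with `f v ≤ d̂_S(v)`. -/
def IsWeakParkingFunction {V E : Type*} [Fintype V] [Fintype E] [DecidableEq V]
    (ends : E → Sym2 V) (f : V → ℕ) : Prop :=
  ∀ S : Finset V, S.Nonempty → ∃ v ∈ S, f v ≤ dhat ends S v

open Filter Topology

theorem eq_zero_of_mem_extremePoints_of_sub_add_mem {𝕜 E : Type*} [Ring 𝕜] [LinearOrder 𝕜]
    [IsStrictOrderedRing 𝕜] [Invertible (2 : 𝕜)] [AddCommGroup E] [Module 𝕜 E] {A : Set E}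
    {x y : E} (hx : x ∈ A.extremePoints 𝕜) (hsub : x - y ∈ A) (hadd : x + y ∈ A) : y = 0 :=
  sub_eq_self.mp (hx.2 hsub hadd (mem_openSegment_sub_add x y))

/-- Constraints that are not tight at `x` have slack, so `x ± t • d` stays in the polyhedron for
small `t > 0`. -/
theorem eq_zero_of_mem_extremePoints_of_map_eq_zero_of_tight {ι E : Type*} [Finite ι]
    [AddCommGroup E] [Module ℝ E] {ℓ : ι → E →ₗ[ℝ] ℝ} {b : ι → ℝ} {x d : E}
    (hx : x ∈ {y | ∀ i, ℓ i y ≤ b i}.extremePoints ℝ) (hd : ∀ i, ℓ i x = b i → ℓ i d = 0) :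
    d = 0 := by
  have hnear : ∀ᶠ t in 𝓝 (0 : ℝ), ∀ i, ℓ i (x + t • d) ≤ b i := by
    refine eventually_all.2 fun i => ?_
    simp only [map_add, map_smul, smul_eq_mul]
    rcases (hx.1 i).eq_or_lt with htight | hslack
    · exact .of_forall fun t => by simp [htight, hd i htight]
    · have hcont : Tendsto (fun t : ℝ => ℓ i x + t * ℓ i d) (𝓝 0) (𝓝 (ℓ i x)) :=
        (by fun_prop : Continuous fun t : ℝ => ℓ i x + t * ℓ i d).tendsto' 0 _ (by simp)
      exact hcont.eventually (eventually_le_nhds hslack)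
  obtain ⟨t, ht, hadd, hsub⟩ :=
    (hnear.and ((continuous_neg.tendsto' (0 : ℝ) 0 neg_zero).eventually hnear)).exists_gt
  have htd : t • d = 0 := eq_zero_of_mem_extremePoints_of_sub_add_mem hx
    (by simpa [neg_smul, ← sub_eq_add_neg] using hsub) hadd
  exact (smul_eq_zero.mp htd).resolve_left ht.ne'

def IsSubmodular {α β : Type*} [Lattice α] [Add β] [LE β] (f : α → β) : Prop :=
  ∀ a b, f (a ⊔ b) + f (a ⊓ b) ≤ f a + f b

/-- For submodular `f` this is the polymatroid of `f`; `scorePolytope ends` is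
`polymatroid (multigraphKappa ends)` by definition. -/
def polymatroid {V : Type*} (f : Finset V → ℕ) : Set (V → ℝ) :=
  {x | (∀ v, 0 ≤ x v) ∧ ∀ S, ∑ v ∈ S, x v ≤ f S}

namespace polymatroid

variable {V : Type*}

def IsTight (f : Finset V → ℕ) (x : V → ℝ) (S : Finset V) : Prop :=
  ∑ v ∈ S, x v = f S

variable {f : Finset V → ℕ} {x : V → ℝ}

theorem eq_zero_of_mem_extremePoints [Finite V] {d : V → ℝ}
    (hx : x ∈ (polymatroid f).extremePoints ℝ) (hd₀ : ∀ v, x v = 0 → d v = 0)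
    (hd : ∀ S, IsTight f x S → ∑ v ∈ S, d v = 0) : d = 0 := by
  let ℓ : V ⊕ Finset V → (V → ℝ) →ₗ[ℝ] ℝ :=
    Sum.elim (fun v => -LinearMap.proj v) (fun S => ∑ v ∈ S, LinearMap.proj v)
  let b : V ⊕ Finset V → ℝ := Sum.elim 0 (fun S => f S)
  have hpoly : polymatroid f = {y | ∀ i, ℓ i y ≤ b i} := by
    ext y
    simp [ℓ, b, polymatroid, Sum.forall]
  rw [hpoly] at hx
  refine eq_zero_of_mem_extremePoints_of_map_eq_zero_of_tight hx ?_
  rintro (v | S) h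
  · simpa [ℓ] using hd₀ v (by simpa [ℓ, b] using h)
  · simpa [ℓ] using hd S (by simpa [ℓ, b, IsTight] using h)

variable [DecidableEq V]

theorem IsTight.union_inter (hf : IsSubmodular f) (hx : x ∈ polymatroid f) {A B : Finset V}
    (hA : IsTight f x A) (hB : IsTight f x B) : IsTight f x (A ∪ B) ∧ IsTight f x (A ∩ B) := by
  have hsub : (f (A ∪ B) : ℝ) + f (A ∩ B) ≤ f A + f B := by exact_mod_cast hf A B
  have hsum : ∑ v ∈ A ∪ B, x v + ∑ v ∈ A ∩ B, x v = ∑ v ∈ A, x v + ∑ v ∈ B, x v :=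
    sum_union_inter
  have hunion := hx.2 (A ∪ B)
  have hinter := hx.2 (A ∩ B)
  unfold IsTight at *
  constructor <;> linarith

variable [Fintype V]

theorem exists_isTight_mem (hx : x ∈ (polymatroid f).extremePoints ℝ) {v : V} (hv : x v ≠ 0) :
    ∃ S, IsTight f x S ∧ v ∈ S := by
  by_contra! hfree
  have := congr_fun (eq_zero_of_mem_extremePoints hx (d := Pi.single v 1)
    (fun w hw => Pi.single_eq_of_ne (by rintro rfl; exact hv hw) 1)
    (fun S hS => by rw [sum_pi_single', if_neg (hfree S hS)])) v
  simp at this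

open Classical in
/-- The intersection of all tight sets containing `v`; it is `univ` when there is none. -/
noncomputable def minTight (f : Finset V → ℕ) (x : V → ℝ) (v : V) : Finset V :=
  ({S | IsTight f x S ∧ v ∈ S} : Finset (Finset V)).inf id

theorem minTight_subset {v : V} {S : Finset V} (hS : IsTight f x S) (hv : v ∈ S) :
    minTight f x v ⊆ S :=
  inf_le (f := id) (by simp [hS, hv])

theorem mem_minTight (v : V) : v ∈ minTight f x v :=
  inf_induction (p := (v ∈ ·)) (mem_univ v) (fun _ h₁ _ h₂ => mem_inter.2 ⟨h₁, h₂⟩)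
    (by simp +contextual)

theorem isTight_minTight (hf : IsSubmodular f) (hx : x ∈ (polymatroid f).extremePoints ℝ)
    {v : V} (hv : x v ≠ 0) : IsTight f x (minTight f x v) := by
  classical
  obtain ⟨S, hS, hvS⟩ := exists_isTight_mem hx hv
  have hne : ({S | IsTight f x S ∧ v ∈ S} : Finset (Finset V)).Nonempty := ⟨S, by simp [hS, hvS]⟩
  rw [minTight, ← inf'_eq_inf hne]
  exact inf'_mem {S | IsTight f x S} (fun A hA B hB => (hA.union_inter hf hx.1 hB).2) _ hne id
    (by simp +contextual)

theorem minTight_ssubset (hf : IsSubmodular f) (hx : x ∈ (polymatroid f).extremePoints ℝ)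
    {v w : V} (hv : x v ≠ 0) (hw : x w ≠ 0) (hvw : v ≠ w) (hvmem : v ∈ minTight f x w) :
    minTight f x v ⊂ minTight f x w := by
  refine (minTight_subset (isTight_minTight hf hx hw) hvmem).ssubset_of_ne fun heq => ?_
  have hiff : ∀ S, IsTight f x S → (v ∈ S ↔ w ∈ S) := fun S hS =>
    ⟨fun h => minTight_subset hS h (heq ▸ mem_minTight w), fun h => minTight_subset hS h hvmem⟩
  have hdir := eq_zero_of_mem_extremePoints hx (d := Pi.single v 1 - Pi.single w 1)
    (fun u hu => by
      rw [Pi.sub_apply, Pi.single_eq_of_ne (by rintro rfl; exact hv hu),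
        Pi.single_eq_of_ne (by rintro rfl; exact hw hu), sub_zero])
    (fun S hS => by simp [sum_sub_distrib, sum_pi_single', hiff S hS])
  simpa [Pi.single_eq_of_ne hvw] using congr_fun hdir v

theorem exists_nat_eq_of_mem_extremePoints (hf : IsSubmodular f)
    (hx : x ∈ (polymatroid f).extremePoints ℝ) (v : V) : ∃ n : ℕ, x v = n := by
  induction hcard : #(minTight f x v) using Nat.strong_induction_on generalizing v with
  | _ k ih =>
  by_cases hv : x v = 0
  · exact ⟨0, by simp [hv]⟩
  set A := minTight f x v
  have hrest : ∀ w ∈ A.erase v, ∃ n : ℕ, x w = n := by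
    intro w hw
    obtain ⟨hwv, hwA⟩ := mem_erase.1 hw
    by_cases hw0 : x w = 0
    · exact ⟨0, by simp [hw0]⟩
    · exact ih _ (hcard ▸ card_lt_card (minTight_ssubset hf hx hw0 hv hwv hwA)) w rfl
  choose! g hg using hrest
  have hA : x v + ∑ w ∈ A.erase v, (g w : ℝ) = f A := by
    rw [← sum_congr rfl hg, add_sum_erase _ _ (mem_minTight v)]
    exact isTight_minTight hf hx hv
  have hle : ∑ w ∈ A.erase v, g w ≤ f A := by
    have hxv := hx.1.1 v
    exact_mod_cast (by push_cast; linarith : ((∑ w ∈ A.erase v, g w : ℕ) : ℝ) ≤ f A)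
  exact ⟨f A - ∑ w ∈ A.erase v, g w, by push_cast [Nat.cast_sub hle]; linarith⟩

theorem exists_mem_eq_zero_or_add_le (hf : IsSubmodular f) (hf₀ : f ∅ = 0)
    (hx : x ∈ (polymatroid f).extremePoints ℝ) {S : Finset V} (hS : S.Nonempty) :
    ∃ v ∈ S, x v = 0 ∨ ∃ T, S.erase v ⊆ T ∧ x v + f T ≤ f (insert v T) := by
  by_cases hzero : ∃ v ∈ S, x v = 0
  · obtain ⟨v, hvS, hv⟩ := hzero
    exact ⟨v, hvS, .inl hv⟩
  push Not at hzero
  obtain ⟨v, hvS, hmax⟩ := S.exists_max_image (fun w => #(minTight f x w)) hS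
  set T := (S.erase v).sup (minTight f x)
  have hT : IsTight f x T :=
    sup_induction (by simp [IsTight, hf₀]) (fun _ hA _ hB => (hA.union_inter hf hx.1 hB).1)
      fun w hw => isTight_minTight hf hx (hzero w (mem_of_mem_erase hw))
  have hvT : v ∉ T := by
    simp only [T, Finset.mem_sup]
    rintro ⟨w, hw, hvw⟩
    obtain ⟨hwv, hwS⟩ := mem_erase.1 hw
    exact (hmax w hwS).not_gt
      (card_lt_card (minTight_ssubset hf hx (hzero v hvS) (hzero w hwS) (Ne.symm hwv) hvw))
  refine ⟨v, hvS, .inr ⟨T, fun w hw => Finset.mem_sup.2 ⟨w, hw, mem_minTight w⟩, ?_⟩⟩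
  have hins := hx.1.2 (insert v T)
  rw [sum_insert hvT] at hins
  unfold IsTight at hT
  linarith

end polymatroid

section multigraph

variable {V E : Type*} [Fintype E] [DecidableEq V] (ends : E → Sym2 V)

theorem multigraphKappa_empty : multigraphKappa ends ∅ = 0 := by
  simp [multigraphKappa]

theorem isSubmodular_multigraphKappa : IsSubmodular (multigraphKappa ends) := by
  classical
  intro A B
  let incident : Finset V → Finset E := fun S => {e | ∃ v ∈ S, v ∈ ends e}
  have hunion : incident (A ∪ B) = incident A ∪ incident B := by
    ext e
    simp only [incident, mem_filter, mem_univ, true_and, mem_union, or_and_right, exists_or]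
  have hinter : incident (A ∩ B) ⊆ incident A ∩ incident B := by
    intro e
    simp only [incident, mem_filter, mem_univ, true_and, mem_inter]
    exact fun ⟨v, ⟨hvA, hvB⟩, hve⟩ => ⟨⟨v, hvA, hve⟩, v, hvB, hve⟩
  change #(incident (A ∪ B)) + #(incident (A ∩ B)) ≤ #(incident A) + #(incident B)
  rw [hunion]
  exact (Nat.add_le_add_left (card_le_card hinter) _).trans (card_union_add_card_inter _ _).le

/-- An edge that meets `insert v T` but not `T` joins `v` to a vertex outside `T`, hence, as
`S.erase v ⊆ T`, to `v` itself or to a vertex outside `S`. -/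
theorem multigraphKappa_insert_le [Fintype V] {S T : Finset V} {v : V} (hST : S.erase v ⊆ T) :
    multigraphKappa ends (insert v T) ≤ multigraphKappa ends T + dhat ends S v := by
  classical
  refine (card_le_card fun e => ?_).trans (card_union_le _ _)
  simp only [mem_filter, mem_univ, true_and, mem_union, mem_insert]
  rintro ⟨w, rfl | hwT, hwe⟩
  · obtain ⟨u, hu⟩ := Sym2.mem_iff_exists.1 hwe
    by_cases huT : u ∈ T
    · exact .inl ⟨u, huT, hu ▸ Sym2.mem_mk_right w u⟩
    · refine .inr ⟨u, hu, or_iff_not_imp_left.2 fun huw huS => huT (hST ?_)⟩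
      exact mem_erase.2 ⟨huw, huS⟩
  · exact .inl ⟨w, hwT, hwe⟩

end multigraph

/-- Every extreme point of the score vector polytope is the vector of a weak
parking function (in particular it has nonnegative integer coordinates). -/
theorem extremePoint_scorePolytope_is_weakParkingVector
    {V E : Type*} [Fintype V] [Fintype E] [DecidableEq V]
    (ends : E → Sym2 V) (x : V → ℝ)
    (hx : x ∈ Set.extremePoints ℝ (scorePolytope ends)) :
    ∃ f : V → ℕ, IsWeakParkingFunction ends f ∧ ∀ v : V, x v = (f v : ℝ) := by
  have hκ := isSubmodular_multigraphKappa ends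
  choose f hf using polymatroid.exists_nat_eq_of_mem_extremePoints hκ hx
  refine ⟨f, fun S hS => ?_, hf⟩
  obtain ⟨v, hvS, hv⟩ :=
    polymatroid.exists_mem_eq_zero_or_add_le hκ (multigraphKappa_empty ends) hx hS
  refine ⟨v, hvS, ?_⟩
  rcases hv with hzero | ⟨T, hST, hslack⟩
  · exact (show f v = 0 by exact_mod_cast (hf v).symm.trans hzero).trans_le (Nat.zero_le _)
  · have hdeg : (multigraphKappa ends (insert v T) : ℝ) ≤ multigraphKappa ends T + dhat ends S v :=
      mod_cast multigraphKappa_insert_le ends hST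
    rw [hf v] at hslack
    exact_mod_cast (by linarith : (f v : ℝ) ≤ dhat ends S v)
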